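/- Let 𝒞 = (C, Q, 𝒯) be a counter system and 𝒞_α its 01-counter system. Then (c,v̂) → (c',v̂') is a step of 𝒞_α if and only if there exists a pair ((c,v),(c',v')) ∈ 𝒯 that is minimal in 𝒯 with respect to the product order ≼₀ × ≼₀ and satisfies α(c,v) = (c,v̂) and α(c',v') = (c',v̂'). (A pair t ∈ 𝒯 is minimal if every t' ∈ 𝒯 with t' ≼₀ × ≼₀ t equals t.) -/

import Mathlib

namespace CS01

variable {C Q A : Type*}

/-- Configurations of a counter system: a controller state and a counter vector. -/
abbrev Conf (C Q : Type*) := C × (Q → ℕ)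

/-- The order `≼₀`: same controller state, pointwise smaller counters,
and the same zero pattern. -/
def Le0 (x y : Conf C Q) : Prop :=
  x.1 = y.1 ∧ (∀ q, x.2 q ≤ y.2 q) ∧ ∀ q, (x.2 q = 0 ↔ y.2 q = 0)

/-- The product order `≼₀ × ≼₀` on pairs of configurations. -/
def ProdLe0 (s t : Conf C Q × Conf C Q) : Prop :=
  Le0 s.1 t.1 ∧ Le0 s.2 t.2

/-- The abstraction `α`, mapping a configuration to its 01-abstraction. -/
def alpha (x : Conf C Q) : Conf C Q :=
  (x.1, fun q => if x.2 q = 0 then 0 else 1)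

/-- Forward `≼₀`-compatibility of a step relation. -/
def FwdCompat (T : Set (Conf C Q × Conf C Q)) : Prop :=
  ∀ x y d, (x, y) ∈ T → Le0 x d → ∃ d', (d, d') ∈ T ∧ Le0 y d'

/-- Backward `≼₀`-compatibility of a step relation. -/
def BwdCompat (T : Set (Conf C Q × Conf C Q)) : Prop :=
  ∀ x y d', (x, y) ∈ T → Le0 y d' → ∃ d, (d, d') ∈ T ∧ Le0 x d

/-- Steps of a counter system are size-preserving. -/
def SizePreserving [Fintype Q] (T : Set (Conf C Q × Conf C Q)) : Prop :=
  ∀ t ∈ T, ∑ q, t.1.2 q = ∑ q, t.2.2 q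

/-- A step of the 01-counter system `𝒞_α`. -/
def AbsStep (T : Set (Conf C Q × Conf C Q)) (x' y' : Conf C Q) : Prop :=
  ∃ t ∈ T, alpha t.1 = x' ∧ alpha t.2 = y'

/-- A finite run of the counter system, starting in an initial configuration. -/
def IsRun (T : Set (Conf C Q × Conf C Q)) (c0 : C) (Q0 : Set Q)
    {n : ℕ} (ρ : Fin (n + 1) → Conf C Q) : Prop :=
  (ρ 0).1 = c0 ∧ (∀ q ∉ Q0, (ρ 0).2 q = 0) ∧
    ∀ i : Fin n, (ρ i.castSucc, ρ i.succ) ∈ T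

/-- A finite run of the 01-counter system, starting in an initial (0/1-valued)
abstract configuration. -/
def IsAbsRun (T : Set (Conf C Q × Conf C Q)) (c0 : C) (Q0 : Set Q)
    {n : ℕ} (σ : Fin (n + 1) → Conf C Q) : Prop :=
  (σ 0).1 = c0 ∧ (∀ q, (σ 0).2 q ≤ 1) ∧ (∀ q ∉ Q0, (σ 0).2 q = 0) ∧
    ∀ i : Fin n, AbsStep T (σ i.castSucc) (σ i.succ)

/-- Reachability in the counter system. -/
def Reach (T : Set (Conf C Q × Conf C Q)) (c0 : C) (Q0 : Set Q)
    (x : Conf C Q) : Prop :=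
  ∃ (n : ℕ) (ρ : Fin (n + 1) → Conf C Q), IsRun T c0 Q0 ρ ∧ ρ (Fin.last n) = x

/-- Reachability in the 01-counter system. -/
def AbsReach (T : Set (Conf C Q × Conf C Q)) (c0 : C) (Q0 : Set Q)
    (x : Conf C Q) : Prop :=
  ∃ (n : ℕ) (σ : Fin (n + 1) → Conf C Q), IsAbsRun T c0 Q0 σ ∧ σ (Fin.last n) = x

/-- The counter vector obtained when `i` processes move from `p` to `p'`. -/
def moveN [DecidableEq Q] (v : Q → ℕ) (p p' : Q) (i : ℕ) : Q → ℕ :=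
  fun q => v q - (if q = p then i else 0) + (if q = p' then i else 0)

/-! `≼₀` fixes the zero pattern, so `α` is constant along it and a pair of `𝒯` may be replaced by
any pair of `𝒯` below it without changing its abstraction. Since `Q` is finite, `ℕ^Q × ℕ^Q` is
well founded under the pointwise order, so below every pair of `𝒯` lies a minimal one. -/

theorem Le0.refl (x : Conf C Q) : Le0 x x :=
  ⟨rfl, fun _ => le_rfl, fun _ => Iff.rfl⟩

theorem Le0.trans {x y z : Conf C Q} (hxy : Le0 x y) (hyz : Le0 y z) : Le0 x z :=
  ⟨hxy.1.trans hyz.1, fun q => (hxy.2.1 q).trans (hyz.2.1 q),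
    fun q => (hxy.2.2 q).trans (hyz.2.2 q)⟩

theorem Le0.alpha_eq {x y : Conf C Q} (h : Le0 x y) : alpha x = alpha y := by
  obtain ⟨hc, -, hzero⟩ := h
  simp only [alpha, hc, hzero]

theorem ProdLe0.refl (t : Conf C Q × Conf C Q) : ProdLe0 t t :=
  ⟨Le0.refl _, Le0.refl _⟩

theorem ProdLe0.trans {s t u : Conf C Q × Conf C Q} (hst : ProdLe0 s t) (htu : ProdLe0 t u) :
    ProdLe0 s u :=
  ⟨hst.1.trans htu.1, hst.2.trans htu.2⟩

theorem ProdLe0.counters_lt {s t : Conf C Q × Conf C Q} (h : ProdLe0 s t) (hne : s ≠ t) :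
    (s.1.2, s.2.2) < (t.1.2, t.2.2) := by
  refine lt_of_le_of_ne ⟨fun q => h.1.2.1 q, fun q => h.2.2.1 q⟩ fun heq => hne ?_
  obtain ⟨h₁, h₂⟩ := Prod.ext_iff.mp heq
  exact Prod.ext (Prod.ext h.1.1 h₁) (Prod.ext h.2.1 h₂)

theorem wellFounded_prodLe0_ne [Finite Q] :
    WellFounded fun s t : Conf C Q × Conf C Q => ProdLe0 s t ∧ s ≠ t :=
  Subrelation.wf (fun h => ProdLe0.counters_lt h.1 h.2)
    (InvImage.wf (fun t : Conf C Q × Conf C Q => (t.1.2, t.2.2)) wellFounded_lt)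

theorem exists_minimal_prodLe0 [Finite Q] {T : Set (Conf C Q × Conf C Q)}
    {t : Conf C Q × Conf C Q} (ht : t ∈ T) :
    ∃ s ∈ T, ProdLe0 s t ∧ ∀ t' ∈ T, ProdLe0 t' s → t' = s := by
  obtain ⟨s, ⟨hsT, hst⟩, hmin⟩ :=
    wellFounded_prodLe0_ne.has_min {s | s ∈ T ∧ ProdLe0 s t} ⟨t, ht, ProdLe0.refl t⟩
  exact ⟨s, hsT, hst, fun t' ht' hle =>
    by_contra fun hne => hmin t' ⟨ht', hle.trans hst⟩ ⟨hle, hne⟩⟩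

theorem stmt12_general [Fintype Q] (T : Set (Conf C Q × Conf C Q)) (xh yh : Conf C Q) :
    AbsStep T xh yh ↔
      ∃ t ∈ T, (∀ t' ∈ T, ProdLe0 t' t → t' = t) ∧
        alpha t.1 = xh ∧ alpha t.2 = yh := by
  constructor
  · rintro ⟨t, ht, hx, hy⟩
    obtain ⟨s, hs, hst, hmin⟩ := exists_minimal_prodLe0 ht
    exact ⟨s, hs, hmin, hst.1.alpha_eq.trans hx, hst.2.alpha_eq.trans hy⟩
  · rintro ⟨t, ht, -, hx, hy⟩
    exact ⟨t, ht, hx, hy⟩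

/-- `(c, v̂) → (c', v̂')` is a step of the 01-counter system `𝒞_α`
iff some pair of `𝒯` that is minimal with respect to `≼₀ × ≼₀` abstracts to
`((c, v̂), (c', v̂'))` under `α`. -/
theorem stmt12 [Fintype C] [Fintype Q] [Nonempty C] [Nonempty Q]
    (T : Set (Conf C Q × Conf C Q)) (hsize : SizePreserving T)
    (xh yh : Conf C Q) :
    AbsStep T xh yh ↔
      ∃ t ∈ T, (∀ t' ∈ T, ProdLe0 t' t → t' = t) ∧
        alpha t.1 = xh ∧ alpha t.2 = yh :=
  stmt12_general T xh yh

end CS01
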